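/- arXiv:1809.09614 — 3 statements merged into one kernel-verified Lean document; each statement's English description precedes it below -/
import Mathlib

section
/- Let T be the folded Baker's map on Q₂. For any k, l ∈ ℕ, j ∈ ℤ ∩ [0, 2^k), and i ∈ ℤ ∩ [0, 2^l), the set T^l(H^j_k) ∩ H^i_l is a single horizontal dyadic strip of width 2^{-(k+l)}; that is, there exists j' ∈ ℤ ∩ [0, 2^{k+l}) such that T^l(H^j_k) ∩ H^i_l = H^{j'}_{k+l}. -/
open MeasureTheory Set

/-- The folded Baker's map on the unit square `Q₂ = (0,1)²` (extended to all of `ℝ²`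
by the same formulas). -/
noncomputable def foldedBaker : ℝ × ℝ → ℝ × ℝ := fun p =>
  if p.1 < 1/2 then (1 - 2 * p.1, (1 - p.2) / 2)
  else if p.1 = 1/2 then (p.2, 1/2)
  else (2 * p.1 - 1, (1 + p.2) / 2)

/-- The open unit square. -/
def Q2 : Set (ℝ × ℝ) := Ioo (0:ℝ) 1 ×ˢ Ioo (0:ℝ) 1

/-- `Q₂` minus all points with a dyadic rational coordinate. -/
def Q2' : Set (ℝ × ℝ) :=
  Q2 \ {p | ∃ k : ℕ, (∃ m : ℤ, 2 ^ k * p.1 = (m : ℝ)) ∨ (∃ m : ℤ, 2 ^ k * p.2 = (m : ℝ))}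

/-- The horizontal dyadic strip `H^j_k` of width `2^{-k}`. -/
def Hstrip (j k : ℕ) : Set (ℝ × ℝ) :=
  (Ioo (0:ℝ) 1 ×ˢ Ioo ((j : ℝ) / 2 ^ k) (((j : ℝ) + 1) / 2 ^ k)) ∩ Q2'

def Dy (x : ℝ) : Prop := ∃ k : ℕ, ∃ m : ℤ, 2 ^ k * x = (m : ℝ)

lemma dyA {x : ℝ} (h : Dy (1 - 2*x)) : Dy x := by
  obtain ⟨k, m, hm⟩ := h
  exact ⟨k+1, 2^k - m, by push_cast; linear_combination -hm⟩

lemma dyB {x : ℝ} (h : Dy (2*x - 1)) : Dy x := by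
  obtain ⟨k, m, hm⟩ := h
  exact ⟨k+1, m + 2^k, by push_cast; linear_combination hm⟩

lemma dyC {x : ℝ} (h : Dy ((1 - x)/2)) : Dy x := by
  obtain ⟨k, m, hm⟩ := h
  exact ⟨k, 2^k - 2*m, by push_cast; linear_combination -2*hm⟩

lemma dyD {x : ℝ} (h : Dy ((1 + x)/2)) : Dy x := by
  obtain ⟨k, m, hm⟩ := h
  exact ⟨k, 2*m - 2^k, by push_cast; linear_combination 2*hm⟩

lemma dy_half : Dy ((1:ℝ)/2) := ⟨1, 1, by norm_num⟩

lemma mem_Q2' {p : ℝ × ℝ} :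
    p ∈ Q2' ↔ 0 < p.1 ∧ p.1 < 1 ∧ 0 < p.2 ∧ p.2 < 1 ∧ ¬Dy p.1 ∧ ¬Dy p.2 := by
  constructor
  · rintro ⟨⟨⟨hx0, hx1⟩, hy0, hy1⟩, hb⟩
    refine ⟨hx0, hx1, hy0, hy1, ?_, ?_⟩
    · rintro ⟨k, m, h⟩; exact hb ⟨k, Or.inl ⟨m, h⟩⟩
    · rintro ⟨k, m, h⟩; exact hb ⟨k, Or.inr ⟨m, h⟩⟩
  · rintro ⟨hx0, hx1, hy0, hy1, hdx, hdy⟩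
    refine ⟨⟨⟨hx0, hx1⟩, hy0, hy1⟩, ?_⟩
    rintro ⟨k, (⟨m, h⟩ | ⟨m, h⟩)⟩
    exacts [hdx ⟨k, m, h⟩, hdy ⟨k, m, h⟩]

lemma mem_Hstrip {j k : ℕ} (hj : j < 2^k) {p : ℝ × ℝ} :
    p ∈ Hstrip j k ↔
      0 < p.1 ∧ p.1 < 1 ∧ (j:ℝ) < 2^k * p.2 ∧ 2^k * p.2 < (j:ℝ) + 1 ∧ ¬Dy p.1 ∧ ¬Dy p.2 := by
  have h2 : (0:ℝ) < 2^k := by positivity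
  have hjr : (j:ℝ) + 1 ≤ 2^k := by exact_mod_cast hj
  constructor
  · rintro ⟨⟨⟨hx0, hx1⟩, ⟨hy0, hy1⟩⟩, hQ⟩
    rw [mem_Q2'] at hQ
    refine ⟨hx0, hx1, ?_, ?_, hQ.2.2.2.2.1, hQ.2.2.2.2.2⟩
    · rw [div_lt_iff₀ h2] at hy0; linarith
    · rw [lt_div_iff₀ h2] at hy1; linarith
  · rintro ⟨hx0, hx1, hy0, hy1, hdx, hdy⟩
    have hjn : (0:ℝ) ≤ (j:ℝ) := Nat.cast_nonneg j
    have hy0' : 0 < p.2 := by nlinarith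
    have hy1' : p.2 < 1 := by nlinarith
    refine ⟨⟨⟨hx0, hx1⟩, ?_, ?_⟩, mem_Q2'.mpr ⟨hx0, hx1, hy0', hy1', hdx, hdy⟩⟩
    · rw [div_lt_iff₀ h2]; linarith
    · rw [lt_div_iff₀ h2]; linarith

lemma Hstrip_subset_Q2' {j k : ℕ} : Hstrip j k ⊆ Q2' := Set.inter_subset_right

lemma Q2'_inv {p : ℝ × ℝ} (hp : p ∈ Q2') : foldedBaker p ∈ Q2' := by
  rw [mem_Q2'] at hp
  obtain ⟨hx0, hx1, hy0, hy1, hdx, hdy⟩ := hp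
  have hne : p.1 ≠ 1/2 := fun h => hdx (h ▸ dy_half)
  rcases lt_or_gt_of_ne hne with hx | hx
  · have : foldedBaker p = (1 - 2*p.1, (1 - p.2)/2) := by unfold foldedBaker; rw [if_pos hx]
    rw [this, mem_Q2']
    exact ⟨by simp; linarith, by simp; linarith, by simp; linarith, by simp; linarith,
      fun h => hdx (dyA h), fun h => hdy (dyC h)⟩
  · have : foldedBaker p = (2*p.1 - 1, (1 + p.2)/2) := by
      unfold foldedBaker; rw [if_neg (not_lt.mpr hx.le), if_neg hne]
    rw [this, mem_Q2']
    exact ⟨by simp; linarith, by simp; linarith, by simp; linarith, by simp; linarith,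
      fun h => hdx (dyB h), fun h => hdy (dyD h)⟩

lemma baker_eval_lt {p : ℝ × ℝ} (h : p.1 < 1/2) :
    foldedBaker p = (1 - 2*p.1, (1 - p.2)/2) := by
  unfold foldedBaker; rw [if_pos h]

lemma baker_eval_gt {p : ℝ × ℝ} (h : 1/2 < p.1) :
    foldedBaker p = (2*p.1 - 1, (1 + p.2)/2) := by
  unfold foldedBaker; rw [if_neg (not_lt.mpr h.le), if_neg (ne_of_gt h)]

lemma baker_image_strip {m n : ℕ} (hm : m < 2^n) :
    foldedBaker '' Hstrip m n = Hstrip (2^n - 1 - m) (n+1) ∪ Hstrip (2^n + m) (n+1) := by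
  have h2 : (0:ℝ) < 2^n := by positivity
  have h1n : 1 ≤ 2^n := Nat.one_le_two_pow
  have hps : 2^(n+1) = 2^n + 2^n := by rw [pow_succ]; ring
  have ha : 2^n - 1 - m < 2^(n+1) := by omega
  have hb : 2^n + m < 2^(n+1) := by omega
  have hacast : ((2^n - 1 - m : ℕ):ℝ) = 2^n - 1 - m := by
    have h' : (2^n - 1 - m) + (m + 1) = 2^n := by omega
    have := congrArg (fun t : ℕ => (t:ℝ)) h'
    push_cast at this; linarith
  have hbcast : ((2^n + m : ℕ):ℝ) = 2^n + m := by push_cast; ring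
  have hpsr : (2:ℝ)^(n+1) = 2 * 2^n := by rw [pow_succ]; ring
  ext p
  constructor
  · rintro ⟨q, hq, rfl⟩
    rw [mem_Hstrip hm] at hq
    obtain ⟨hx0, hx1, hy0, hy1, hdx, hdy⟩ := hq
    have hne : q.1 ≠ 1/2 := fun h => hdx (h ▸ dy_half)
    rcases lt_or_gt_of_ne hne with hx | hx
    · left
      rw [baker_eval_lt hx, mem_Hstrip ha]
      refine ⟨by simp; linarith, by simp; linarith, ?_, ?_, ?_, ?_⟩
      · simp only; rw [hacast, hpsr]; nlinarith
      · simp only; rw [hacast, hpsr]; nlinarith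
      · exact fun h => hdx (dyA h)
      · exact fun h => hdy (dyC h)
    · right
      rw [baker_eval_gt hx, mem_Hstrip hb]
      refine ⟨by simp; linarith, by simp; linarith, ?_, ?_, ?_, ?_⟩
      · simp only; rw [hbcast, hpsr]; nlinarith
      · simp only; rw [hbcast, hpsr]; nlinarith
      · exact fun h => hdx (dyB h)
      · exact fun h => hdy (dyD h)
  · rintro (h | h)
    · rw [mem_Hstrip ha] at h
      obtain ⟨hu0, hu1, hv0, hv1, hdu, hdv⟩ := h
      rw [hacast] at hv0 hv1
      rw [hpsr] at hv0 hv1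
      refine ⟨((1 - p.1)/2, 1 - 2*p.2), ?_, ?_⟩
      · rw [mem_Hstrip hm]
        refine ⟨by simp; linarith, by simp; linarith, ?_, ?_, ?_, ?_⟩
        · simp only; nlinarith
        · simp only; nlinarith
        · exact fun h => hdu (dyC h)
        · exact fun h => hdv (dyA h)
      · rw [baker_eval_lt (show ((1 - p.1)/2, 1 - 2*p.2).1 < 1/2 by simp; linarith)]
        rw [Prod.ext_iff]
        exact ⟨by simp; try ring, by simp; try ring⟩
    · rw [mem_Hstrip hb] at h
      obtain ⟨hu0, hu1, hv0, hv1, hdu, hdv⟩ := h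
      rw [hbcast] at hv0 hv1
      rw [hpsr] at hv0 hv1
      refine ⟨((1 + p.1)/2, 2*p.2 - 1), ?_, ?_⟩
      · rw [mem_Hstrip hm]
        refine ⟨by simp; linarith, by simp; linarith, ?_, ?_, ?_, ?_⟩
        · simp only; nlinarith
        · simp only; nlinarith
        · exact fun h => hdu (dyD h)
        · exact fun h => hdv (dyB h)
      · rw [baker_eval_gt (show (1:ℝ)/2 < ((1 + p.1)/2, 2*p.2 - 1).1 by simp; linarith)]
        rw [Prod.ext_iff]
        exact ⟨by simp; try ring, by simp; try ring⟩

lemma key_piece {c i d m : ℕ} (hc1 : c * 2^d ≤ m) (hc2 : m + 1 ≤ (c+1) * 2^d)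
    (hne : c ≠ i) : m + 1 ≤ i * 2^d ∨ (i+1) * 2^d ≤ m := by
  rcases lt_or_gt_of_ne hne with h | h
  · exact Or.inl (hc2.trans (Nat.mul_le_mul (by omega) le_rfl))
  · exact Or.inr ((Nat.mul_le_mul (by omega) le_rfl).trans hc1)

lemma strip_subset {L d m i : ℕ} (hm : m < 2^(L+d)) (h1 : i * 2^d ≤ m)
    (h2 : m + 1 ≤ (i+1) * 2^d) : Hstrip m (L+d) ⊆ Hstrip i L := by
  have hi : i < 2^L := by
    by_contra hL
    push_neg at hL
    have : 2^L * 2^d ≤ i * 2^d := Nat.mul_le_mul hL le_rfl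
    rw [← pow_add] at this; omega
  intro p hp
  rw [mem_Hstrip hm] at hp
  rw [mem_Hstrip hi]
  obtain ⟨hx0, hx1, hy0, hy1, hdx, hdy⟩ := hp
  have hd : (0:ℝ) < 2^d := by positivity
  have hps : (2:ℝ)^(L+d) = 2^L * 2^d := by rw [pow_add]
  have c1 : (i:ℝ) * 2^d ≤ m := by exact_mod_cast h1
  have c2 : (m:ℝ) + 1 ≤ ((i:ℝ)+1) * 2^d := by exact_mod_cast h2
  rw [hps] at hy0 hy1
  refine ⟨hx0, hx1, ?_, ?_, hdx, hdy⟩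
  · have h : (i:ℝ) * 2^d < (2^L * p.2) * 2^d := by nlinarith
    exact lt_of_mul_lt_mul_right h hd.le
  · have h : (2^L * p.2) * 2^d < ((i:ℝ) + 1) * 2^d := by nlinarith
    exact lt_of_mul_lt_mul_right h hd.le

lemma strip_disjoint {L d m i : ℕ}
    (h : m + 1 ≤ i * 2^d ∨ (i+1) * 2^d ≤ m) :
    Hstrip m (L+d) ∩ Hstrip i L = ∅ := by
  rw [Set.eq_empty_iff_forall_notMem]
  rintro p ⟨⟨⟨-, hm0, hm1⟩, -⟩, ⟨⟨-, hi0, hi1⟩, -⟩⟩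
  have hd : (0:ℝ) < 2^d := by positivity
  have hL : (0:ℝ) < 2^L := by positivity
  have hN : (0:ℝ) < 2^(L+d) := by positivity
  have hps : (2:ℝ)^(L+d) = 2^L * 2^d := by rw [pow_add]
  rcases h with h | h
  · have hc : (m:ℝ) + 1 ≤ (i:ℝ) * 2^d := by exact_mod_cast h
    rw [div_lt_iff₀ hL] at hi0
    rw [lt_div_iff₀ hN] at hm1
    rw [hps] at hm1
    nlinarith
  · have hc : ((i:ℝ) + 1) * 2^d ≤ m := by exact_mod_cast h
    rw [lt_div_iff₀ hL] at hi1
    rw [div_lt_iff₀ hN] at hm0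
    rw [hps] at hm0
    nlinarith

lemma Q2'_subset_iUnion (l : ℕ) : Q2' ⊆ ⋃ i ∈ Finset.range (2^l), Hstrip i l := by
  intro p hp
  obtain ⟨hx0, hx1, hy0, hy1, hdx, hdy⟩ := mem_Q2'.mp hp
  have h2 : (0:ℝ) < 2^l := by positivity
  set i := Nat.floor ((2:ℝ)^l * p.2) with hidef
  have hnn : (0:ℝ) ≤ 2^l * p.2 := by positivity
  have hfl : (i:ℝ) ≤ 2^l * p.2 := Nat.floor_le hnn
  have hil : i < 2^l := by
    have hcast : ((2^l : ℕ):ℝ) = 2^l := by push_cast; ring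
    exact (Nat.floor_lt hnn).mpr (by rw [hcast]; nlinarith)
  have hne : (i:ℝ) ≠ 2^l * p.2 := by
    intro h
    exact hdy ⟨l, (i:ℤ), by push_cast; linarith⟩
  have hlt : (i:ℝ) < 2^l * p.2 := lt_of_le_of_ne hfl hne
  have hlt2 : 2^l * p.2 < (i:ℝ) + 1 := Nat.lt_floor_add_one _
  refine Set.mem_iUnion₂.mpr ⟨i, Finset.mem_range.mpr hil, ?_⟩
  rw [mem_Hstrip hil]
  exact ⟨hx0, hx1, hlt, hlt2, hdx, hdy⟩

lemma iter_image_subset (l : ℕ) {j k : ℕ} :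
    foldedBaker^[l] '' Hstrip j k ⊆ Q2' := by
  induction l with
  | zero => simpa using Hstrip_subset_Q2'
  | succ l ih =>
    rw [Function.iterate_succ', Set.image_comp]
    rintro p ⟨q, hq, rfl⟩
    exact Q2'_inv (ih hq)

def F : ℕ → ℕ → ℕ → ℕ → ℕ
  | 0, _, j, _ => j
  | (l+1), k, j, i =>
      if i < 2^l then 2^(k+l) - 1 - F l k j (2^l - 1 - i)
      else 2^(k+l) + F l k j (i - 2^l)

lemma F_bounds : ∀ l k j i : ℕ, j < 2^k → i < 2^l →
    i * 2^k ≤ F l k j i ∧ F l k j i + 1 ≤ (i+1) * 2^k := by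
  intro l
  induction l with
  | zero =>
    intro k j i hj hi
    have : i = 0 := by simpa using hi
    subst this
    simp [F]
    omega
  | succ l ih =>
    intro k j i hj hi
    have hpow : 2^(k+l) = 2^l * 2^k := by rw [pow_add]; ring
    have h2l : 2^(l+1) = 2^l + 2^l := by rw [pow_succ]; ring
    by_cases h : i < 2^l
    · have hi'lt : 2^l - 1 - i < 2^l := by omega
      obtain ⟨h1, h2⟩ := ih k j (2^l - 1 - i) hj hi'lt
      rw [show (2^l - 1 - i + 1) * 2^k = (2^l - 1 - i) * 2^k + 2^k from by ring] at h2
      have e1 : i * 2^k + (2^l - 1 - i) * 2^k + 2^k = 2^(k+l) := by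
        rw [hpow]
        have hsum : i + (2^l - 1 - i) + 1 = 2^l := by omega
        calc i * 2^k + (2^l - 1 - i) * 2^k + 2^k = (i + (2^l - 1 - i) + 1) * 2^k := by ring
          _ = 2^l * 2^k := by rw [hsum]
      show i * 2^k ≤ F (l+1) k j i ∧ F (l+1) k j i + 1 ≤ (i+1) * 2^k
      rw [F, if_pos h, show (i+1) * 2^k = i * 2^k + 2^k from by ring]
      set A := i * 2^k
      set B := (2^l - 1 - i) * 2^k
      set C := (2:ℕ)^k
      set D := (2:ℕ)^(k+l)
      set G := F l k j (2^l - 1 - i)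
      omega
    · have hi' : i - 2^l < 2^l := by omega
      obtain ⟨h1, h2⟩ := ih k j (i - 2^l) hj hi'
      rw [show (i - 2^l + 1) * 2^k = (i - 2^l) * 2^k + 2^k from by ring] at h2
      have e1 : i * 2^k = 2^(k+l) + (i - 2^l) * 2^k := by
        rw [hpow]
        have hsum : i = 2^l + (i - 2^l) := by omega
        calc i * 2^k = (2^l + (i - 2^l)) * 2^k := by rw [← hsum]
          _ = 2^l * 2^k + (i - 2^l) * 2^k := by ring
      show i * 2^k ≤ F (l+1) k j i ∧ F (l+1) k j i + 1 ≤ (i+1) * 2^k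
      rw [F, if_neg h, show (i+1) * 2^k = i * 2^k + 2^k from by ring]
      set A := i * 2^k
      set B := (i - 2^l) * 2^k
      set C := (2:ℕ)^k
      set D := (2:ℕ)^(k+l)
      set G := F l k j (i - 2^l)
      omega

lemma main_lemma : ∀ l k j i : ℕ, j < 2^k → i < 2^l →
    foldedBaker^[l] '' Hstrip j k ∩ Hstrip i l = Hstrip (F l k j i) (k + l) := by
  intro l
  induction l with
  | zero =>
    intro k j i hj hi
    have hi0 : i = 0 := by simpa using hi
    subst hi0
    simp only [Function.iterate_zero, Set.image_id, F, Nat.add_zero]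
    apply Set.inter_eq_left.mpr
    intro p hp
    rw [mem_Hstrip hj] at hp
    obtain ⟨hx0, hx1, hy0, hy1, hdx, hdy⟩ := hp
    rw [mem_Hstrip (by norm_num : 0 < 2^0)]
    have hjn : (0:ℝ) ≤ (j:ℝ) := Nat.cast_nonneg j
    have h2 : (0:ℝ) < 2^k := by positivity
    have hjr : (j:ℝ) + 1 ≤ 2^k := by exact_mod_cast hj
    refine ⟨hx0, hx1, ?_, ?_, hdx, hdy⟩
    · simp; nlinarith
    · simp; nlinarith
  | succ l ih =>
    intro k j i hj hi
    -- decomposition of the l-th image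
    have decomp : foldedBaker^[l] '' Hstrip j k
        = ⋃ i' ∈ Finset.range (2^l), Hstrip (F l k j i') (k + l) := by
      apply subset_antisymm
      · intro p hp
        have hpQ : p ∈ Q2' := iter_image_subset l hp
        obtain ⟨i', hi', hpH⟩ := Set.mem_iUnion₂.mp (Q2'_subset_iUnion l hpQ)
        rw [Finset.mem_range] at hi'
        exact Set.mem_iUnion₂.mpr ⟨i', Finset.mem_range.mpr hi',
          (ih k j i' hj hi') ▸ ⟨hp, hpH⟩⟩
      · intro p hp
        obtain ⟨i', hi', hpH⟩ := Set.mem_iUnion₂.mp hp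
        rw [Finset.mem_range] at hi'
        rw [← ih k j i' hj hi'] at hpH
        exact hpH.1
    have h2l : 2^(l+1) = 2^l + 2^l := by rw [pow_succ]; ring
    have hpow : 2^(k+l) = 2^l * 2^k := by rw [pow_add]; ring
    have hFb : ∀ i' : ℕ, i' < 2^l →
        i' * 2^k ≤ F l k j i' ∧ F l k j i' + 1 ≤ (i'+1) * 2^k :=
      fun i' hi' => F_bounds l k j i' hj hi'
    -- bounds for F (l+1)
    have hF1 : i * 2^k ≤ F (l+1) k j i ∧ F (l+1) k j i + 1 ≤ (i+1) * 2^k :=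
      F_bounds (l+1) k j i hj hi
    have hkl : (l+1) + k = k + (l+1) := by ring
    have hFlt : F (l+1) k j i < 2^(k+(l+1)) := by
      have h' : (i+1) * 2^k ≤ 2^(l+1) * 2^k := Nat.mul_le_mul (by omega) le_rfl
      have hpow2 : 2^(k+(l+1)) = 2^(l+1) * 2^k := by rw [pow_add]; ring
      omega
    apply subset_antisymm
    · -- ⊆
      intro p ⟨hpA, hpH⟩
      rw [Function.iterate_succ', Set.image_comp, decomp] at hpA
      obtain ⟨q, hq, rfl⟩ := hpA
      obtain ⟨i', hi'mem, hqH⟩ := Set.mem_iUnion₂.mp hq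
      rw [Finset.mem_range] at hi'mem
      have hFlt' : F l k j i' < 2^(k+l) := by
        have := (hFb i' hi'mem).2
        have h' : (i'+1) * 2^k ≤ 2^l * 2^k := Nat.mul_le_mul (by omega) le_rfl
        omega
      have himg : foldedBaker q ∈
          Hstrip (2^(k+l) - 1 - F l k j i') (k+l+1) ∪ Hstrip (2^(k+l) + F l k j i') (k+l+1) :=
        (baker_image_strip hFlt') ▸ Set.mem_image_of_mem _ hqH
      obtain ⟨hb1, hb2⟩ := hFb i' hi'mem
      rcases himg with hA | hA
      · -- lower piece: lies over index c = 2^l - 1 - i'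
        set c := 2^l - 1 - i' with hc
        have hcb1 : c * 2^k ≤ 2^(k+l) - 1 - F l k j i' := by
          have e1 : c * 2^k + (i'+1) * 2^k = 2^(k+l) := by
            rw [hpow, ← Nat.add_mul]
            congr 1
            omega
          omega
        have hcb2 : (2^(k+l) - 1 - F l k j i') + 1 ≤ (c+1) * 2^k := by
          have e1 : (c+1) * 2^k + i' * 2^k = 2^(k+l) := by
            rw [hpow, ← Nat.add_mul]
            congr 1
            omega
          omega
        by_cases hci : c = i
        · -- matching piece
          have hFm : F (l+1) k j i = 2^(k+l) - 1 - F l k j i' := by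
            rw [F, if_pos (by omega : i < 2^l)]
            congr 2
            omega
          rw [show k + (l+1) = (k+l)+1 from by ring, hFm]
          exact hA
        · exfalso
          have := strip_disjoint (L := l+1) (d := k) (key_piece hcb1 hcb2 hci)
          rw [show (l+1)+k = k+l+1 from by ring] at this
          exact Set.eq_empty_iff_forall_notMem.mp this _ ⟨hA, hpH⟩
      · -- upper piece: lies over index c = 2^l + i'
        set c := 2^l + i' with hc
        have hcb1 : c * 2^k ≤ 2^(k+l) + F l k j i' := by
          have e1 : c * 2^k = 2^(k+l) + i' * 2^k := by
            rw [hpow, hc, Nat.add_mul]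
          omega
        have hcb2 : (2^(k+l) + F l k j i') + 1 ≤ (c+1) * 2^k := by
          have e1 : (c+1) * 2^k = 2^(k+l) + (i'+1) * 2^k := by
            rw [hpow, show c + 1 = 2^l + (i'+1) from by omega, Nat.add_mul]
          omega
        by_cases hci : c = i
        · have hFm : F (l+1) k j i = 2^(k+l) + F l k j i' := by
            rw [F, if_neg (by omega : ¬ i < 2^l), show i - 2^l = i' from by omega]
          rw [show k + (l+1) = (k+l)+1 from by ring, hFm]
          exact hA
        · exfalso
          have := strip_disjoint (L := l+1) (d := k) (key_piece hcb1 hcb2 hci)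
          rw [show (l+1)+k = k+l+1 from by ring] at this
          exact Set.eq_empty_iff_forall_notMem.mp this _ ⟨hA, hpH⟩
    · -- ⊇
      intro p hp
      have hsub : Hstrip (F (l+1) k j i) (k+(l+1)) ⊆ Hstrip i (l+1) := by
        have h := strip_subset (L := l+1) (d := k) (m := F (l+1) k j i) (i := i)
          (by rw [hkl]; exact hFlt) hF1.1 hF1.2
        rwa [hkl] at h
      constructor
      · -- p in the (l+1)-st image
        by_cases h : i < 2^l
        · set i' := 2^l - 1 - i with hi'def
          have hi'lt : i' < 2^l := by omega
          have hFlt' : F l k j i' < 2^(k+l) := by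
            have := (hFb i' hi'lt).2
            have h' : (i'+1) * 2^k ≤ 2^l * 2^k := Nat.mul_le_mul (by omega) le_rfl
            omega
          have hFm : F (l+1) k j i = 2^(k+l) - 1 - F l k j i' := by
            rw [F, if_pos h, ← hi'def]
          have hp' : p ∈ foldedBaker '' Hstrip (F l k j i') (k+l) := by
            rw [baker_image_strip hFlt']
            left
            rw [show k+(l+1) = (k+l)+1 from by ring, hFm] at hp
            exact hp
          rw [Function.iterate_succ', Set.image_comp, decomp]
          obtain ⟨q, hq, rfl⟩ := hp'
          exact Set.mem_image_of_mem _
            (Set.mem_iUnion₂.mpr ⟨i', Finset.mem_range.mpr hi'lt, hq⟩)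
        · set i' := i - 2^l with hi'def
          have hi'lt : i' < 2^l := by omega
          have hFlt' : F l k j i' < 2^(k+l) := by
            have := (hFb i' hi'lt).2
            have h' : (i'+1) * 2^k ≤ 2^l * 2^k := Nat.mul_le_mul (by omega) le_rfl
            omega
          have hFm : F (l+1) k j i = 2^(k+l) + F l k j i' := by
            rw [F, if_neg h, ← hi'def]
          have hp' : p ∈ foldedBaker '' Hstrip (F l k j i') (k+l) := by
            rw [baker_image_strip hFlt']
            right
            rw [show k+(l+1) = (k+l)+1 from by ring, hFm] at hp
            exact hp
          rw [Function.iterate_succ', Set.image_comp, decomp]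
          obtain ⟨q, hq, rfl⟩ := hp'
          exact Set.mem_image_of_mem _
            (Set.mem_iUnion₂.mpr ⟨i', Finset.mem_range.mpr hi'lt, hq⟩)
      · exact hsub hp

theorem image_of_horizontal_strip (k l j i : ℕ) (hj : j < 2 ^ k) (hi : i < 2 ^ l) :
    ∃ j' : ℕ, j' < 2 ^ (k + l) ∧
      foldedBaker^[l] '' Hstrip j k ∩ Hstrip i l = Hstrip j' (k + l) := by
  refine ⟨F l k j i, ?_, main_lemma l k j i hj hi⟩
  have h := (F_bounds l k j i hj hi).2
  have h' : (i+1) * 2^k ≤ 2^l * 2^k := Nat.mul_le_mul (by omega) le_rfl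
  have hpow : 2^(k+l) = 2^l * 2^k := by rw [pow_add]; ring
  omega
end

section
/- Let d ≥ 2, let {T_n}_{n≥1} be any sequence of Lebesgue-measure-preserving bijections of Q_d := (0,1)^d, and let λ_n > 0 satisfy λ_n → 0 as n → ∞. Then there exists a Lebesgue-measurable set A ⊆ Q_d with |A| = 1/2 and a strictly increasing sequence n_1 < n_2 < ⋯ of positive integers such that for each j ∈ ℕ, T_{n_j}(A) contains a Euclidean ball of radius λ_{n_j}^{1/d}. -/
/-!
Since `λ_n → 0`, one can pass to a subsequence along which the balls `B_j` of radius
`λ_{n_j}^{1/d}` about the centre of the cube have total volume at most `1/2`. Any measurable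
`A ⊆ Q_d` of measure `1/2` containing every `T_{n_j}⁻¹(B_j)` then works, and such an `A`
exists (sweep the cube by the slabs `x₀ < t`) as soon as the outer measure of `T_{n_j}⁻¹(B_j)`
is at most `|B_j|`.

That bound is the heart of the matter, because `T_n` is not assumed measurable. Images of
measurable sets under `T_n` are null-measurable, since such an image and the image of its
complement have complementary outer measures. So `T_n⁻¹` agrees with a Borel map `g` on a
conull Borel set `G`, and `g` is injective there. By the Lusin–Souslin theorem
`T_n⁻¹(B ∩ G) = g(B ∩ G)` is Borel, of measure `|B ∩ G|`, while `T_n⁻¹(B \ G)` lies in the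
null set `Q_d \ g(G)`.
-/

open MeasureTheory Set Filter

/-- The open unit cube `Q_d = (0,1)^d` in `ℝ^d` (with the Euclidean norm). -/
def Qd (d : ℕ) : Set (EuclideanSpace ℝ (Fin d)) := {x | ∀ i, x i ∈ Ioo (0:ℝ) 1}

open scoped ENNReal

namespace MeasureTheory

variable {α : Type*} [MeasurableSpace α] {μ : Measure α} {S t : Set α}

theorem nullMeasurableSet_of_measure_add_measure_sdiff_le (hS : MeasurableSet S)
    (hμS : μ S ≠ ∞) (htS : t ⊆ S) (h : μ t + μ (S \ t) ≤ μ S) : NullMeasurableSet t μ := by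
  set H := toMeasurable μ t ∩ S
  have hH : MeasurableSet H := (measurableSet_toMeasurable μ t).inter hS
  have hHS : H ⊆ S := inter_subset_right
  have htH : t ⊆ H := subset_inter (subset_toMeasurable μ t) htS
  have hμH : μ H = μ t := by
    rw [Measure.measure_toMeasurable_inter hS (measure_ne_top_of_subset htS hμS),
      inter_eq_left.2 htS]
  have hS_split : μ t + μ (S \ H) = μ S := by
    rw [← hμH, ← measure_inter_add_sdiff S hH, inter_eq_right.2 hHS]
  have hSt_split : μ (H \ t) + μ (S \ H) = μ (S \ t) := by
    rw [← measure_inter_add_sdiff (S \ t) hH]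
    congr 2
    · ext x; have := @hHS x; simp only [Set.mem_sdiff, mem_inter_iff]; tauto
    · ext x; have := @htH x; simp only [Set.mem_sdiff]; tauto
  have hnull : μ (H \ t) = 0 := by
    have hfin : μ t + μ (S \ H) ≠ ∞ := hS_split ▸ hμS
    rw [← hS_split, ← hSt_split, add_left_comm] at h
    exact nonpos_iff_eq_zero.1
      (ENNReal.le_of_add_le_add_right hfin (h.trans_eq (zero_add _).symm))
  exact hH.nullMeasurableSet.congr
    (ae_eq_set.2 ⟨hnull, by rw [sdiff_eq_empty.2 htH, measure_empty]⟩)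

theorem exists_measurableSet_eqOn_measurable_of_aemeasurable {β : Type*} [MeasurableSpace β]
    {g : α → β} (hS : MeasurableSet S) (hg : AEMeasurable g (μ.restrict S)) :
    ∃ G ⊆ S, MeasurableSet G ∧ μ (S \ G) = 0 ∧ ∃ g', Measurable g' ∧ EqOn g g' G := by
  set N := toMeasurable (μ.restrict S) {x | g x ≠ hg.mk g x}
  have hN : MeasurableSet N := measurableSet_toMeasurable _ _
  refine ⟨S \ N, sdiff_subset, hS.diff hN, ?_, hg.mk g, hg.measurable_mk,
    fun x hx => not_not.1 fun hne => hx.2 (subset_toMeasurable _ _ hne)⟩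
  rw [sdiff_sdiff_right_self, inter_comm, ← Measure.restrict_apply hN, measure_toMeasurable]
  exact hg.ae_eq_mk

theorem exists_measure_union_eq_of_measure_sdiff_le {H : Set α} {E : ℝ → Set α}
    (hE : Monotone E) (hEsdiff : ∀ s t, s ≤ t → μ (E t \ E s) ≤ ENNReal.ofReal (t - s))
    {a b : ℝ} (hab : a ≤ b) (hb : μ (H ∪ E b) ≠ ∞) {c : ℝ≥0∞}
    (hc : c ∈ Icc (μ (H ∪ E a)) (μ (H ∪ E b))) :
    ∃ t ∈ Icc a b, μ (H ∪ E t) = c := by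
  have hmono : ∀ {s t}, s ≤ t → μ (H ∪ E s) ≤ μ (H ∪ E t) := fun hst =>
    measure_mono (union_subset_union_right H (hE hst))
  have hfin : ∀ t ≤ b, μ (H ∪ E t) ≠ ∞ := fun t ht => ne_top_of_le_ne_top hb (hmono ht)
  have hstep : ∀ s t, s ≤ t → μ (H ∪ E t) ≤ μ (H ∪ E s) + ENNReal.ofReal (t - s) := by
    intro s t hst
    calc μ (H ∪ E t) ≤ μ ((H ∪ E s) ∪ (E t \ E s)) := measure_mono fun x => by
          simp only [mem_union, Set.mem_sdiff]; tauto
      _ ≤ μ (H ∪ E s) + ENNReal.ofReal (t - s) :=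
          (measure_union_le _ _).trans (by gcongr; exact hEsdiff s t hst)
  set F : ℝ → ℝ := fun t => (μ (H ∪ E t)).toReal
  have hlip : LipschitzOnWith 1 F (Icc a b) := LipschitzOnWith.of_le_add fun x hx y hy => by
    rcases le_total x y with hxy | hyx
    · exact (ENNReal.toReal_mono (hfin y hy.2) (hmono hxy)).trans
        (le_add_of_nonneg_right dist_nonneg)
    · calc F x ≤ F y + (x - y) := by
            rw [← ENNReal.toReal_ofReal (sub_nonneg.2 hyx), ← ENNReal.toReal_add (hfin y hy.2)
              ENNReal.ofReal_ne_top]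
            exact ENNReal.toReal_mono (ENNReal.add_ne_top.2 ⟨hfin y hy.2, ENNReal.ofReal_ne_top⟩)
              (hstep y x hyx)
        _ ≤ F y + dist x y := by rw [Real.dist_eq]; gcongr; exact le_abs_self _
  obtain ⟨t, ht, hFt⟩ := intermediate_value_Icc hab hlip.continuousOn
    ⟨ENNReal.toReal_mono (ne_top_of_le_ne_top hb hc.2) hc.1, ENNReal.toReal_mono hb hc.2⟩
  exact ⟨t, ht, (ENNReal.toReal_eq_toReal_iff' (hfin t ht.2) (ne_top_of_le_ne_top hb hc.2)).1 hFt⟩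

section BijOn

variable {f : α → α}

theorem nullMeasurableSet_image_of_bijOn (hS : MeasurableSet S) (hμS : μ S ≠ ∞)
    (hf : BijOn f S S) (hμf : ∀ s ⊆ S, MeasurableSet s → μ (f '' s) = μ s) {s : Set α}
    (hsS : s ⊆ S) (hs : MeasurableSet s) : NullMeasurableSet (f '' s) μ := by
  refine nullMeasurableSet_of_measure_add_measure_sdiff_le hS hμS
    (hf.image_eq ▸ image_mono hsS) ?_
  have hcompl : S \ f '' s = f '' (S \ s) := by
    rw [hf.injOn.image_sdiff, hf.image_eq, inter_eq_right.2 hsS]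
  rw [hcompl, hμf s hsS hs, hμf _ sdiff_subset (hS.diff hs), ← measure_inter_add_sdiff S hs,
    inter_eq_right.2 hsS]

theorem nullMeasurable_invFunOn [Nonempty α] (hS : MeasurableSet S) (hμS : μ S ≠ ∞)
    (hf : BijOn f S S) (hμf : ∀ s ⊆ S, MeasurableSet s → μ (f '' s) = μ s) :
    NullMeasurable (Function.invFunOn f S) (μ.restrict S) := by
  intro s hs
  have hinv : InvOn (Function.invFunOn f S) f S S := hf.invOn_invFunOn
  refine ((nullMeasurableSet_image_of_bijOn hS hμS hf hμf inter_subset_right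
    (hs.inter hS)).mono Measure.restrict_le_self).congr ?_
  refine eventuallyEq_set.2 (ae_restrict_of_forall_mem hS fun x hx => ?_)
  constructor
  · rintro ⟨y, ⟨hys, hyS⟩, rfl⟩
    rwa [mem_preimage, hinv.1 hyS]
  · intro hgx
    exact ⟨_, ⟨hgx, hf.surjOn.mapsTo_invFunOn hx⟩, hinv.2 hx⟩

theorem measure_inter_preimage_le [StandardBorelSpace α] [Nonempty α] (hS : MeasurableSet S)
    (hμS : μ S ≠ ∞) (hf : BijOn f S S) (hμf : ∀ s ⊆ S, MeasurableSet s → μ (f '' s) = μ s)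
    {B : Set α} (hB : MeasurableSet B) (hBS : B ⊆ S) : μ (S ∩ f ⁻¹' B) ≤ μ B := by
  set g := Function.invFunOn f S
  have hinv : InvOn g f S S := hf.invOn_invFunOn
  have hg : BijOn g S S := BijOn.symm hinv.symm hf
  obtain ⟨G, hGS, hG, hSG, g', hg', hgg'⟩ := exists_measurableSet_eqOn_measurable_of_aemeasurable
    hS (nullMeasurable_invFunOn hS hμS hf hμf).aemeasurable
  have himage_meas : ∀ u ⊆ G, MeasurableSet u → MeasurableSet (g '' u) := fun u huG hu => by
    rw [(hgg'.mono huG).image_eq]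
    exact hu.image_of_measurable_injOn hg'
      ((hg.injOn.mono (huG.trans hGS)).congr (hgg'.mono huG))
  have hμimage : ∀ u ⊆ G, MeasurableSet u → μ (g '' u) = μ u := fun u huG hu => by
    rw [← hμf _ (hg.mapsTo.mono_left (huG.trans hGS)).image_subset (himage_meas u huG hu),
      hinv.2.image_image' (huG.trans hGS)]
  have hpre : S ∩ f ⁻¹' B = g '' B := by
    ext x
    constructor
    · rintro ⟨hxS, hfx⟩
      exact ⟨f x, hfx, hinv.1 hxS⟩
    · rintro ⟨y, hy, rfl⟩
      exact ⟨hg.mapsTo (hBS hy), by rw [mem_preimage, hinv.2 (hBS hy)]; exact hy⟩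
  have hcover : g '' B ⊆ g '' (B ∩ G) ∪ (S \ g '' G) := by
    rintro _ ⟨b, hb, rfl⟩
    by_cases hbG : b ∈ G
    · exact Or.inl ⟨b, ⟨hb, hbG⟩, rfl⟩
    · exact Or.inr ⟨hg.mapsTo (hBS hb), fun ⟨c, hcG, hcb⟩ =>
        hbG (hg.injOn (hGS hcG) (hBS hb) hcb ▸ hcG)⟩
  have hnull : μ (S \ g '' G) = 0 := by
    have hgG : g '' G ⊆ S := (hg.mapsTo.mono_left hGS).image_subset
    rw [← hμf _ sdiff_subset (hS.diff (himage_meas G subset_rfl hG)), hf.injOn.image_sdiff,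
      hf.image_eq, inter_eq_right.2 hgG, hinv.2.image_image' hGS, hSG]
  calc μ (S ∩ f ⁻¹' B) ≤ μ (g '' (B ∩ G)) + μ (S \ g '' G) :=
        hpre ▸ (measure_mono hcover).trans (measure_union_le _ _)
    _ ≤ μ B := by
        rw [hμimage _ inter_subset_right (hB.inter hG), hnull, add_zero]
        exact measure_mono inter_subset_left

end BijOn

end MeasureTheory

section Cube

variable {d : ℕ}

theorem Qd_eq_preimage_ofLp : Qd d = WithLp.ofLp ⁻¹' univ.pi fun _ => Ioo 0 1 := by
  ext x
  simp [Qd]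

theorem measurableSet_Qd : MeasurableSet (Qd d) := by
  rw [Qd_eq_preimage_ofLp]
  exact (MeasurableSet.univ_pi fun _ => measurableSet_Ioo).preimage
    (PiLp.volume_preserving_ofLp _).measurable

theorem volume_Qd : volume (Qd d) = 1 := by
  rw [Qd_eq_preimage_ofLp, (PiLp.volume_preserving_ofLp _).measure_preimage
    (MeasurableSet.univ_pi fun _ => measurableSet_Ioo).nullMeasurableSet, volume_pi_pi]
  simp

theorem volume_Qd_inter_coord_mem_Ico_le (i : Fin d) (s t : ℝ) :
    volume (Qd d ∩ {x | x i ∈ Ico s t}) ≤ ENNReal.ofReal (t - s) := by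
  classical
  have hsub : Qd d ∩ {x | x i ∈ Ico s t} ⊆
      WithLp.ofLp ⁻¹' univ.pi (Function.update (fun _ => Ioo (0 : ℝ) 1) i (Ico s t)) := by
    rintro x ⟨hxQ, hxi⟩ j -
    rcases eq_or_ne j i with rfl | hji
    · simpa using hxi
    · simpa [hji] using hxQ j
  refine (measure_mono hsub).trans_eq ?_
  rw [(PiLp.volume_preserving_ofLp _).measure_preimage (MeasurableSet.univ_pi fun j => by
    rcases eq_or_ne j i with rfl | hji <;> simp [*]).nullMeasurableSet, volume_pi_pi,
    Finset.prod_eq_single i (fun j _ hji => by simp [hji]) (by simp)]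
  simp

theorem ball_subset_Qd {r : ℝ} (hr : r ≤ 1 / 2) :
    Metric.ball (WithLp.toLp 2 fun _ => 1 / 2) r ⊆ Qd d := by
  intro x hx i
  have := (PiLp.dist_apply_le x _ i).trans_lt (Metric.mem_ball.1 hx)
  rw [Real.dist_eq, abs_lt] at this
  simp only [one_div, neg_lt_sub_iff_lt_add] at this
  constructor <;> linarith

theorem exists_measurableSet_subset_Qd_volume_eq (hd : 0 < d)
    {U : Set (EuclideanSpace ℝ (Fin d))} (hUQ : U ⊆ Qd d) {c : ℝ≥0∞} (hUc : volume U ≤ c)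
    (hc : c ≤ 1) :
    ∃ A, U ⊆ A ∧ A ⊆ Qd d ∧ MeasurableSet A ∧ volume A = c := by
  set H := toMeasurable volume U ∩ Qd d
  have hH : MeasurableSet H := (measurableSet_toMeasurable _ _).inter measurableSet_Qd
  have hHQ : H ⊆ Qd d := inter_subset_right
  have hvolH : volume H = volume U := by
    rw [Measure.measure_toMeasurable_inter measurableSet_Qd
      (measure_ne_top_of_subset hUQ (volume_Qd ▸ ENNReal.one_ne_top)), inter_eq_left.2 hUQ]
  set i : Fin d := ⟨0, hd⟩
  set E : ℝ → Set (EuclideanSpace ℝ (Fin d)) := fun t => Qd d ∩ {x | x i < t}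
  have hE : Monotone E := fun s t hst =>
    inter_subset_inter_right _ fun x hx => lt_of_lt_of_le hx hst
  have hEsdiff : ∀ s t, s ≤ t → volume (E t \ E s) ≤ ENNReal.ofReal (t - s) := by
    refine fun s t _ => (measure_mono ?_).trans (volume_Qd_inter_coord_mem_Ico_le i s t)
    rintro x ⟨⟨hxQ, hxt⟩, hxs⟩
    exact ⟨hxQ, not_lt.1 fun h => hxs ⟨hxQ, h⟩, hxt⟩
  have hE0 : H ∪ E 0 = H := union_eq_left.2 fun x hx => absurd hx.2 (hx.1 i).1.asymm
  have hE1 : H ∪ E 1 = Qd d := by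
    rw [show E 1 = Qd d from inter_eq_left.2 fun x hx => (hx i).2, union_eq_right.2 hHQ]
  obtain ⟨t, -, ht⟩ := exists_measure_union_eq_of_measure_sdiff_le hE hEsdiff zero_le_one
    (by rw [hE1, volume_Qd]; exact ENNReal.one_ne_top)
    (c := c) ⟨by rw [hE0, hvolH]; exact hUc, by rw [hE1, volume_Qd]; exact hc⟩
  exact ⟨H ∪ E t, fun x hx => Or.inl ⟨subset_toMeasurable _ _ hx, hUQ hx⟩,
    union_subset hHQ inter_subset_left,
    hH.union (measurableSet_Qd.inter (measurableSet_lt (by fun_prop) measurable_const)), ht⟩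

theorem volume_ball_rpow_inv_finrank {E : Type*} [NormedAddCommGroup E] [NormedSpace ℝ E]
    [MeasurableSpace E] [BorelSpace E] [FiniteDimensional ℝ E] [Nontrivial E] (μ : Measure E)
    [μ.IsAddHaarMeasure] (c : E) {x : ℝ} (hx : 0 ≤ x) :
    μ (Metric.ball c (x ^ ((1 : ℝ) / Module.finrank ℝ E))) =
      ENNReal.ofReal x * μ (Metric.ball 0 1) := by
  rw [Measure.addHaar_ball _ _ (by positivity), one_div,
    Real.rpow_inv_natCast_pow hx Module.finrank_pos.ne']

end Cube

theorem no_uniform_rate_ball (d : ℕ) (hd : 2 ≤ d)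
    (T : ℕ → EuclideanSpace ℝ (Fin d) → EuclideanSpace ℝ (Fin d))
    (hbij : ∀ n, Set.BijOn (T n) (Qd d) (Qd d))
    (hmp : ∀ n, ∀ s ⊆ Qd d, MeasurableSet s → volume (T n '' s) = volume s)
    (lam : ℕ → ℝ) (hlam : ∀ n, 0 < lam n) (hlim : Tendsto lam atTop (nhds 0)) :
    ∃ A ⊆ Qd d, MeasurableSet A ∧ volume A = 1/2 ∧
      ∃ ns : ℕ → ℕ, StrictMono ns ∧ (∀ j, 0 < ns j) ∧
        ∀ j : ℕ, ∃ c : EuclideanSpace ℝ (Fin d),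
          Metric.ball c (lam (ns j) ^ ((1:ℝ) / d)) ⊆ T (ns j) '' A := by
  have hd0 : 0 < d := by omega
  have : Nontrivial (EuclideanSpace ℝ (Fin d)) :=
    Module.nontrivial_of_finrank_pos (R := ℝ) (by simpa using hd0)
  set c : EuclideanSpace ℝ (Fin d) := WithLp.toLp 2 fun _ => 1 / 2
  set ρ : ℕ → ℝ := fun n => lam n ^ ((1 : ℝ) / d)
  have hρ : Tendsto ρ atTop (nhds 0) := by
    have hpos : (0 : ℝ) < 1 / d := one_div_pos.2 (Nat.cast_pos.2 hd0)
    have := (Real.continuousAt_rpow_const 0 (1 / d) (Or.inr hpos.le)).tendsto.comp hlim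
    rwa [Real.zero_rpow hpos.ne'] at this
  have hvol : Tendsto (fun n => volume (Metric.ball c (ρ n))) atTop (nhds 0) := by
    have hball : ∀ n, volume (Metric.ball c (ρ n)) =
        ENNReal.ofReal (lam n) * volume (Metric.ball (0 : EuclideanSpace ℝ (Fin d)) 1) :=
      fun n => by simpa only [finrank_euclideanSpace_fin] using
        volume_ball_rpow_inv_finrank volume c (hlam n).le
    simpa [hball] using ENNReal.Tendsto.mul_const (ENNReal.tendsto_ofReal hlim)
      (Or.inr measure_ball_lt_top.ne)
  obtain ⟨ε, hε, hεsum⟩ :=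
    ENNReal.exists_pos_sum_of_countable (by norm_num : (1 / 2 : ℝ≥0∞) ≠ 0) ℕ
  obtain ⟨ns, hns, hgood⟩ := extraction_forall_of_eventually fun j =>
    (eventually_gt_atTop 0).and <|
      (hρ.eventually (ge_mem_nhds (by norm_num : (0 : ℝ) < 1 / 2))).and
        (hvol.eventually (ge_mem_nhds (ENNReal.coe_pos.2 (hε j))))
  set U := ⋃ j, Qd d ∩ T (ns j) ⁻¹' Metric.ball c (ρ (ns j))
  have hU : volume U ≤ 1 / 2 := calc
    volume U ≤ ∑' j, volume (Qd d ∩ T (ns j) ⁻¹' Metric.ball c (ρ (ns j))) := measure_iUnion_le _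
    _ ≤ ∑' j, (ε j : ℝ≥0∞) := ENNReal.tsum_le_tsum fun j =>
      (measure_inter_preimage_le measurableSet_Qd (volume_Qd ▸ ENNReal.one_ne_top) (hbij _)
        (hmp _) measurableSet_ball (ball_subset_Qd (hgood j).2.1)).trans (hgood j).2.2
    _ ≤ 1 / 2 := hεsum.le
  obtain ⟨A, hUA, hAQ, hA, hvolA⟩ := exists_measurableSet_subset_Qd_volume_eq hd0
    (iUnion_subset fun j => inter_subset_left) hU (by norm_num)
  refine ⟨A, hAQ, hA, hvolA, ns, hns, fun j => (hgood j).1, fun j => ⟨c, ?_⟩⟩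
  calc Metric.ball c (ρ (ns j))
      = T (ns j) '' (Qd d ∩ T (ns j) ⁻¹' Metric.ball c (ρ (ns j))) := by
        rw [image_inter_preimage, (hbij _).image_eq,
          inter_eq_right.2 (ball_subset_Qd (hgood j).2.1)]
    _ ⊆ T (ns j) '' A := image_mono ((subset_iUnion _ j).trans hUA)
end

section
/- Let α ∈ (0,1) and let u₂(x₁,x₂) := cos(x₁) sin(x₂) ((1−α) sin(x₁) + sin(x₂)) / (sin(x₁) + sin(x₂))^{1+α} (the vertical component of the velocity field ∇⊥ψ̃_α). Then there exists δ₀ > 0 such that for every δ ∈ (0, δ₀] and every x = (x₁, x₂) ∈ S_δ one has u₂(x) ≥ (1 − 4δ) x₂^{1−α}. -/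
open Set Real

noncomputable section

/-- The plane with the Euclidean norm. -/
abbrev E2 := EuclideanSpace ℝ (Fin 2)

/-- The vertical component `u₂ = ∂_{x₁} ψ̃_α` of the velocity field `∇⊥ψ̃_α`, where
`ψ̃_α(x₁,x₂) = sin x₁ sin x₂ / (sin x₁ + sin x₂)^α`. -/
def u2 (α : ℝ) (x : E2) : ℝ :=
  Real.cos (x 0) * Real.sin (x 1) *
    ((1 - α) * Real.sin (x 0) + Real.sin (x 1)) /
      (Real.sin (x 0) + Real.sin (x 1)) ^ (1 + α)

/-- The region `S_δ = A_δ ∩ {x₁ ≤ δ x₂}`, where `A_δ = B_δ(0) ∩ (0,π)²`. -/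
def Sδ (δ : ℝ) : Set E2 :=
  (Metric.ball (0 : E2) δ ∩ {x | x 0 ∈ Ioo 0 π ∧ x 1 ∈ Ioo 0 π}) ∩ {x | x 0 ≤ δ * x 1}

/-! On `S_δ` we have `0 < x₁ ≤ δ x₂` and `x₂ < δ`. Dropping `(1 - α) sin x₁ ≥ 0` and using
`cos x₁ ≥ 1 - δ²/2`, `sin x₂ ≥ x₂ (1 - δ²/6)`, the numerator of `u₂` is at least `(1 - δ²) x₂²`;
since `sin x₁ + sin x₂ ≤ (1 + δ) x₂` and `(1 + δ)^(1+α) ≤ 1 + 3δ`, the denominator is at most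
`(1 + 3δ) x₂^(1+α)`. Then `(1 - 4δ)(1 + 3δ) ≤ 1 - δ²`, and `δ₀ = 1/4` keeps `1 - 4δ ≥ 0`. -/

lemma one_sub_sq_mul_sq_le_cos_mul_sin_sq {a b δ : ℝ} (ha : |a| ≤ δ) (hb₀ : 0 ≤ b)
    (hb : b ≤ δ) (hδ : δ ≤ 1) : (1 - δ ^ 2) * b ^ 2 ≤ cos a * sin b ^ 2 := by
  have hcos : 1 - δ ^ 2 / 2 ≤ cos a := by
    have : a ^ 2 ≤ δ ^ 2 := sq_le_sq' (abs_le.mp ha).1 (abs_le.mp ha).2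
    linarith [one_sub_sq_div_two_le_cos (x := a)]
  have hsin : b * (1 - δ ^ 2 / 6) ≤ sin b := by
    have : b ^ 3 ≤ δ ^ 2 * b := by nlinarith [mul_le_mul hb hb hb₀ (hb₀.trans hb)]
    linarith [sin_ge_sub_cube hb₀]
  have hδ₀ : 0 ≤ δ := (abs_nonneg a).trans ha
  have hsin_sq : (b * (1 - δ ^ 2 / 6)) ^ 2 ≤ sin b ^ 2 :=
    pow_le_pow_left₀ (mul_nonneg hb₀ (by nlinarith)) hsin 2
  calc (1 - δ ^ 2) * b ^ 2 ≤ (1 - δ ^ 2 / 2) * (b * (1 - δ ^ 2 / 6)) ^ 2 := by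
        have : 1 - δ ^ 2 ≤ (1 - δ ^ 2 / 2) * (1 - δ ^ 2 / 6) ^ 2 := by
          nlinarith [pow_le_one₀ hδ₀ hδ (n := 2), pow_nonneg hδ₀ 4]
        nlinarith [sq_nonneg b]
    _ ≤ cos a * sin b ^ 2 := mul_le_mul hcos hsin_sq (sq_nonneg _) (by nlinarith)

lemma one_add_rpow_le_one_add_three_mul {δ p : ℝ} (hδ₀ : 0 ≤ δ) (hδ : δ ≤ 1) (hp : p ≤ 2) :
    (1 + δ) ^ p ≤ 1 + 3 * δ :=
  calc (1 + δ) ^ p ≤ (1 + δ) ^ (2 : ℝ) := rpow_le_rpow_of_exponent_le (by linarith) hp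
    _ = (1 + δ) ^ 2 := rpow_two _
    _ ≤ 1 + 3 * δ := by nlinarith

lemma one_sub_four_mul_mul_rpow_le {α δ a b : ℝ} (hα₀ : -1 ≤ α) (hα₁ : α ≤ 1) (hδ₀ : 0 ≤ δ)
    (hδ : δ ≤ 1 / 4) (ha₀ : 0 ≤ a) (hab : a ≤ δ * b) (hb₀ : 0 < b) (hb : b ≤ δ) :
    (1 - 4 * δ) * b ^ (1 - α) ≤
      cos a * sin b * ((1 - α) * sin a + sin b) / (sin a + sin b) ^ (1 + α) := by
  have ha : a ≤ δ := hab.trans (by nlinarith)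
  have hsin_a : 0 ≤ sin a := sin_nonneg_of_nonneg_of_le_pi ha₀ (by linarith [pi_gt_three])
  have hsin_b : 0 < sin b := sin_pos_of_pos_of_lt_pi hb₀ (by linarith [pi_gt_three])
  have hcos_a : 0 ≤ cos a :=
    cos_nonneg_of_mem_Icc ⟨by linarith [pi_gt_three], by linarith [pi_gt_three]⟩
  have hnum : (1 - δ ^ 2) * b ^ 2 ≤ cos a * sin b * ((1 - α) * sin a + sin b) :=
    calc (1 - δ ^ 2) * b ^ 2 ≤ cos a * sin b ^ 2 :=
          one_sub_sq_mul_sq_le_cos_mul_sin_sq (abs_le.mpr ⟨by linarith, ha⟩) hb₀.le hb (by linarith)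
      _ ≤ cos a * sin b * ((1 - α) * sin a + sin b) := by
          have : 0 ≤ (1 - α) * sin a := mul_nonneg (by linarith) hsin_a
          nlinarith [mul_nonneg hcos_a hsin_b.le]
  have hden : (sin a + sin b) ^ (1 + α) ≤ (1 + 3 * δ) * b ^ (1 + α) :=
    calc (sin a + sin b) ^ (1 + α) ≤ ((1 + δ) * b) ^ (1 + α) :=
          rpow_le_rpow (by positivity) (by nlinarith [sin_le ha₀, sin_le hb₀.le]) (by linarith)
      _ = (1 + δ) ^ (1 + α) * b ^ (1 + α) := mul_rpow (by linarith) hb₀.le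
      _ ≤ (1 + 3 * δ) * b ^ (1 + α) := by
          gcongr
          exact one_add_rpow_le_one_add_three_mul hδ₀ (by linarith) (by linarith)
  rw [le_div_iff₀ (by positivity)]
  calc (1 - 4 * δ) * b ^ (1 - α) * (sin a + sin b) ^ (1 + α)
      ≤ (1 - 4 * δ) * b ^ (1 - α) * ((1 + 3 * δ) * b ^ (1 + α)) := by
        gcongr
        exact mul_nonneg (by linarith) (by positivity)
    _ = (1 - 4 * δ) * (1 + 3 * δ) * b ^ 2 := by
        have hpow : b ^ (1 - α) * b ^ (1 + α) = b ^ 2 := by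
          rw [← rpow_add hb₀]
          norm_num
        linear_combination (1 - 4 * δ) * (1 + 3 * δ) * hpow
    _ ≤ (1 - δ ^ 2) * b ^ 2 := by nlinarith [sq_nonneg b]
    _ ≤ _ := hnum

lemma coord_bounds_of_mem_Sδ {δ : ℝ} {x : E2} (hx : x ∈ Sδ δ) :
    0 < x 0 ∧ x 0 ≤ δ * x 1 ∧ 0 < x 1 ∧ x 1 < δ := by
  obtain ⟨⟨hball, ⟨hx₀, -⟩, hx₁, -⟩, hle⟩ := hx
  refine ⟨hx₀, hle, hx₁, ?_⟩
  calc x 1 ≤ ‖x 1‖ := le_abs_self _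
    _ ≤ ‖x‖ := PiLp.norm_apply_le x 1
    _ < δ := mem_ball_zero_iff.mp hball

theorem u2_lower_bound (α : ℝ) (hα : α ∈ Ioo (0:ℝ) 1) :
    ∃ δ₀ : ℝ, 0 < δ₀ ∧ ∀ δ ∈ Ioc (0:ℝ) δ₀, ∀ x ∈ Sδ δ,
      (1 - 4 * δ) * (x 1) ^ ((1:ℝ) - α) ≤ u2 α x := by
  refine ⟨1 / 4, by norm_num, fun δ ⟨hδ₀, hδ⟩ x hx => ?_⟩
  obtain ⟨hx₀, hx₀₁, hx₁, hx₁δ⟩ := coord_bounds_of_mem_Sδ hx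
  exact one_sub_four_mul_mul_rpow_le (by linarith [hα.1]) hα.2.le hδ₀.le hδ hx₀.le hx₀₁ hx₁
    hx₁δ.le

end
end
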